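/- arXiv:1405.6000 — 3 statements merged into one kernel-verified Lean document; each statement's English description precedes it below -/
import Mathlib

section
/- Let H be an n×n complex Hermitian matrix whose largest eigenvalue λ₁ is simple (has algebraic multiplicity 1). Then H has exactly k (2 ≤ k ≤ n) distinct eigenvalues if and only if there exist k distinct real numbers λ₁, λ₂, …, λ_k such that: (i) H − λᵢI is a singular matrix for each 2 ≤ i ≤ k; and (ii) ∏_{i=2}^{k} (H − λᵢI) = b·y·y* and H·y = λ₁·y for some nonzero complex number b and some nonzero vector y ∈ ℂⁿ. Moreover, in that case λ₁, λ₂, …, λ_k are exactly the k distinct eigenvalues of H. -/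
/-!
Let `p = ∏_{i ≥ 2} (X - λᵢ)`. If `H v = z v` with `v ≠ 0`, then `p(H) v = p(z) v`. When
`p(H) = b y y*`, either `p(z) = 0`, so `z` is one of `λ₂, …, λ_k`, or `v` is a multiple of `y`
and `z = λ₁`; hence the spectrum of `H` is exactly `{λ₁, …, λ_k}`. Conversely, take for
`λ₂, …, λ_k` the eigenvalues other than `λ₁` and diagonalise `H = U diag(d) U*`. Then
`p(H) = U diag(p(d)) U*`, and `p` vanishes at every `dⱼ` except the single one equal to the
simple eigenvalue `λ₁`, so `p(H) = p(λ₁) u u*` for the corresponding unit eigenvector `u`.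
-/

open Polynomial Matrix Finset

theorem Set.exists_injective_range_eq_of_ncard_eq {α : Type*} {s : Set α} {k : ℕ}
    (hs : s.ncard = k) {a : α} (ha : a ∈ s) (i : Fin k) :
    ∃ f : Fin k → α, Function.Injective f ∧ Set.range f = s ∧ f i = a := by
  have : Finite s := Set.finite_of_ncard_ne_zero (hs ▸ (Fin.pos i).ne')
  let e : s ≃ Fin k := Finite.equivFinOfCardEq (by rwa [Nat.card_coe_set_eq])
  let e' := e.trans (Equiv.swap (e ⟨a, ha⟩) i)
  refine ⟨Subtype.val ∘ e'.symm, Subtype.val_injective.comp e'.symm.injective, ?_, ?_⟩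
  · rw [Set.range_comp, e'.symm.range_eq_univ, Set.image_univ, Subtype.range_coe]
  · simp [e']

theorem Polynomial.eval_prod_X_sub_C_eq_zero_iff {ι R : Type*} [CommRing R] [IsDomain R]
    (s : Finset ι) (μ : ι → R) (z : R) :
    (∏ i ∈ s, (X - C (μ i))).eval z = 0 ↔ ∃ i ∈ s, μ i = z := by
  simp only [eval_prod, eval_sub, eval_X, eval_C, prod_eq_zero_iff, sub_eq_zero, eq_comm (a := z)]

namespace Matrix

variable {n : Type*} [Fintype n] [DecidableEq n]

section Field

variable {K : Type*} [Field K]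

theorem mem_spectrum_iff_det_sub_smul_one_eq_zero (A : Matrix n n K) (r : K) :
    r ∈ spectrum K A ↔ (A - r • 1).det = 0 := by
  rw [spectrum.mem_iff, isUnit_iff_isUnit_det, isUnit_iff_ne_zero, not_not,
    Algebra.algebraMap_eq_smul_one, ← neg_sub, det_neg]
  simp

theorem mem_spectrum_iff_exists_mulVec_eq_smul (A : Matrix n n K) (r : K) :
    r ∈ spectrum K A ↔ ∃ v ≠ 0, A *ᵥ v = r • v := by
  simp_rw [mem_spectrum_iff_det_sub_smul_one_eq_zero, ← exists_mulVec_eq_zero_iff, sub_mulVec,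
    smul_mulVec, one_mulVec, sub_eq_zero]

theorem aeval_mulVec_of_mulVec_eq_smul {A : Matrix n n K} {r : K} {v : n → K}
    (hv : A *ᵥ v = r • v) (p : K[X]) : aeval A p *ᵥ v = p.eval r • v := by
  induction p using Polynomial.induction_on' with
  | add p q hp hq => simp [add_mulVec, hp, hq, add_smul]
  | monomial k a =>
    have hpow : (A ^ k) *ᵥ v = r ^ k • v := by
      induction k with
      | zero => simp
      | succ k ih => rw [pow_succ', ← mulVec_mulVec, ih, mulVec_smul, hv, smul_smul, pow_succ]
    rw [aeval_monomial, ← Algebra.smul_def, smul_mulVec, hpow, smul_smul, eval_monomial]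

theorem aeval_diagonal (d : n → K) (p : K[X]) :
    aeval (diagonal d) p = diagonal fun i => p.eval (d i) := by
  rw [← diagonalAlgHom_apply K, aeval_algHom_apply, aeval_pi_apply]
  rfl

theorem spectrum_eq_range_of_aeval_prod_eq_smul_vecMulVec {ι : Type*} [Fintype ι] [DecidableEq ι]
    {A : Matrix n n K} {μ : ι → K} {i₀ : ι}
    (hμ : ∀ i, i ≠ i₀ → μ i ∈ spectrum K A) {b : K} {y w : n → K} (hy : y ≠ 0)
    (hprod : aeval A (∏ i ∈ univ.erase i₀, (X - C (μ i))) = b • vecMulVec y w)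
    (hAy : A *ᵥ y = μ i₀ • y) :
    spectrum K A = Set.range μ := by
  refine Set.Subset.antisymm (fun z hz => ?_) (Set.range_subset_iff.2 fun i => ?_)
  · obtain ⟨v, hv, hAv⟩ := (mem_spectrum_iff_exists_mulVec_eq_smul A z).1 hz
    set p : K[X] := ∏ i ∈ univ.erase i₀, (X - C (μ i))
    by_cases hpz : p.eval z = 0
    · obtain ⟨i, -, rfl⟩ := (eval_prod_X_sub_C_eq_zero_iff _ _ _).1 hpz
      exact ⟨i, rfl⟩
    obtain ⟨c, rfl⟩ : ∃ c : K, v = c • y := by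
      have hpv := aeval_mulVec_of_mulVec_eq_smul hAv p
      rw [hprod, smul_mulVec, vecMulVec_mulVec, op_smul_eq_smul, smul_smul] at hpv
      exact ⟨(p.eval z)⁻¹ * (b * (w ⬝ᵥ v)), by
        rw [mul_smul, hpv, smul_smul, inv_mul_cancel₀ hpz, one_smul]⟩
    have hz : z • c • y = μ i₀ • c • y := by
      rw [← hAv, mulVec_smul, hAy, smul_comm]
    exact ⟨i₀, (smul_left_injective K hv hz).symm⟩
  · by_cases hi : i = i₀
    · exact (mem_spectrum_iff_exists_mulVec_eq_smul A _).2 ⟨y, hy, hi ▸ hAy⟩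
    · exact hμ i hi

end Field

theorem mul_diagonal_single_mul_star {R : Type*} [CommSemiring R] [StarRing R]
    (U : Matrix n n R) (i : n) (c : R) :
    U * diagonal (Pi.single i c) * star U =
      c • vecMulVec (U *ᵥ Pi.single i 1) (star (U *ᵥ Pi.single i 1)) := by
  have hd : diagonal (Pi.single i c) = c • vecMulVec (Pi.single i 1) (Pi.single i 1) := by
    rw [diagonal_single, ← single_eq_single_vecMulVec_single, smul_single, smul_eq_mul, mul_one]
  rw [hd, mul_smul_comm, mul_vecMulVec, smul_mul_assoc, vecMulVec_mul, star_mulVec,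
    Pi.star_single, star_one, star_eq_conjTranspose]

namespace IsHermitian

variable {𝕜 : Type*} [RCLike 𝕜] {A : Matrix n n 𝕜} (hA : A.IsHermitian)
include hA

theorem card_eigenvalues_eq_rootMultiplicity (r : 𝕜) :
    #{i | (hA.eigenvalues i : 𝕜) = r} = A.charpoly.rootMultiplicity r := by
  rw [← count_roots, hA.roots_charpoly_eq_eigenvalues, Multiset.count_map, card_def, filter_val]
  simp [eq_comm]

theorem aeval_eq (p : 𝕜[X]) :
    aeval A p = (hA.eigenvectorUnitary : Matrix n n 𝕜) *
      diagonal (fun i => p.eval (hA.eigenvalues i : 𝕜)) *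
        star (hA.eigenvectorUnitary : Matrix n n 𝕜) := by
  conv_lhs => rw [hA.spectral_theorem]
  rw [aeval_algHom_apply, Unitary.conjStarAlgAut_apply, aeval_diagonal]
  rfl

theorem exists_aeval_eq_smul_vecMulVec_of_rootMultiplicity_eq_one {r : 𝕜}
    (hr : A.charpoly.rootMultiplicity r = 1) {p : 𝕜[X]}
    (hp : ∀ z ∈ spectrum 𝕜 A, z ≠ r → p.eval z = 0) :
    ∃ y : n → 𝕜, y ≠ 0 ∧ A *ᵥ y = r • y ∧ aeval A p = p.eval r • vecMulVec y (star y) := by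
  obtain ⟨i₀, hi₀⟩ := card_eq_one.1 ((hA.card_eigenvalues_eq_rootMultiplicity r).trans hr)
  have heig : ∀ i, (hA.eigenvalues i : 𝕜) = r ↔ i = i₀ := fun i => by
    simpa using Finset.ext_iff.1 hi₀ i
  have hdiag : (fun i => p.eval (hA.eigenvalues i : 𝕜)) = Pi.single i₀ (p.eval r) := by
    funext i
    by_cases hi : i = i₀
    · rw [hi, Pi.single_eq_same, (heig i₀).2 rfl]
    · rw [Pi.single_eq_of_ne hi]
      exact hp _ (hA.spectrum_eq_image_range ▸ ⟨_, ⟨i, rfl⟩, rfl⟩) (mt (heig i).1 hi)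
  refine ⟨hA.eigenvectorBasis i₀, ?_, ?_, ?_⟩
  · exact fun h => hA.eigenvectorBasis.orthonormal.ne_zero i₀ ((WithLp.ofLp_eq_zero 2).1 h)
  · rw [hA.mulVec_eigenvectorBasis, RCLike.real_smul_eq_coe_smul (K := 𝕜), (heig i₀).2 rfl]
  · rw [hA.aeval_eq, hdiag, mul_diagonal_single_mul_star, eigenvectorUnitary_mulVec]

theorem exists_aeval_prod_eq_smul_vecMulVec {ι : Type*} [Fintype ι] [DecidableEq ι]
    {μ : ι → 𝕜} (hμ : Function.Injective μ) (hrange : Set.range μ = spectrum 𝕜 A) {i₀ : ι}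
    (hsimple : A.charpoly.rootMultiplicity (μ i₀) = 1) :
    ∃ b : 𝕜, b ≠ 0 ∧ ∃ y : n → 𝕜, y ≠ 0 ∧
      aeval A (∏ i ∈ univ.erase i₀, (X - C (μ i))) = b • vecMulVec y (star y) ∧
      A *ᵥ y = μ i₀ • y := by
  have hp : ∀ z ∈ spectrum 𝕜 A, z ≠ μ i₀ → (∏ i ∈ univ.erase i₀, (X - C (μ i))).eval z = 0 := by
    rw [← hrange]
    rintro _ ⟨i, rfl⟩ hi
    exact (eval_prod_X_sub_C_eq_zero_iff _ _ _).2
      ⟨i, mem_erase.2 ⟨mt (congrArg μ) hi, mem_univ i⟩, rfl⟩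
  have hp0 : (∏ i ∈ univ.erase i₀, (X - C (μ i))).eval (μ i₀) ≠ 0 := by
    rw [Ne, eval_prod_X_sub_C_eq_zero_iff]
    rintro ⟨i, hi, hμi⟩
    exact (mem_erase.1 hi).1 (hμ hμi)
  obtain ⟨y, hy, hAy, hprod⟩ :=
    hA.exists_aeval_eq_smul_vecMulVec_of_rootMultiplicity_eq_one hsimple hp
  exact ⟨_, hp0, y, hy, hprod, hAy⟩

end IsHermitian

end Matrix

/-- **Theorem (Li–Wang–Huang).** Let `H` be an `n×n` complex Hermitian matrix whose largest
eigenvalue `λ₁` is simple. Then `H` has exactly `k` (`2 ≤ k ≤ n`) distinct eigenvalues iff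
there exist `k` distinct real numbers `λ₁, …, λ_k` such that (i) `H − λᵢI` is singular for
`2 ≤ i ≤ k`, and (ii) `∏_{i=2}^k (H − λᵢI) = b y y*` and `H y = λ₁ y` for some nonzero `b ∈ ℂ`
and nonzero `y ∈ ℂⁿ`. Moreover, such `λ₁, …, λ_k` are exactly the distinct eigenvalues of `H`. -/
theorem hermitian_distinct_eigenvalues_iff
    (n k : ℕ) (hk2 : 2 ≤ k)
    (H : Matrix (Fin n) (Fin n) ℂ) (hH : H.IsHermitian)
    (lam1 : ℝ) (hmem : (lam1 : ℂ) ∈ spectrum ℂ H)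
    (hsimple : H.charpoly.rootMultiplicity (lam1 : ℂ) = 1) :
    ((spectrum ℂ H).ncard = k ↔
      ∃ μ : Fin k → ℝ, Function.Injective μ ∧
        (∀ i : Fin k, i ≠ ⟨0, by omega⟩ → (H - (μ i : ℂ) • 1).det = 0) ∧
        ∃ b : ℂ, b ≠ 0 ∧ ∃ y : Fin n → ℂ, y ≠ 0 ∧
          (Polynomial.aeval H)
              (∏ i ∈ Finset.univ.erase (⟨0, by omega⟩ : Fin k), (X - C (μ i : ℂ))) =
            b • Matrix.vecMulVec y (star y) ∧
          H.mulVec y = (μ ⟨0, by omega⟩ : ℂ) • y) ∧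
    (∀ μ : Fin k → ℝ, Function.Injective μ →
      (∀ i : Fin k, i ≠ ⟨0, by omega⟩ → (H - (μ i : ℂ) • 1).det = 0) →
      (∃ b : ℂ, b ≠ 0 ∧ ∃ y : Fin n → ℂ, y ≠ 0 ∧
        (Polynomial.aeval H)
            (∏ i ∈ Finset.univ.erase (⟨0, by omega⟩ : Fin k), (X - C (μ i : ℂ))) =
          b • Matrix.vecMulVec y (star y) ∧
        H.mulVec y = (μ ⟨0, by omega⟩ : ℂ) • y) →
      spectrum ℂ H = Set.range (fun i => (μ i : ℂ))) := by
  refine ⟨⟨fun hk => ?_, ?_⟩, fun μ _ hsing ⟨_, _, _, hy, hprod, hHy⟩ =>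
    spectrum_eq_range_of_aeval_prod_eq_smul_vecMulVec
      (fun i hi => (mem_spectrum_iff_det_sub_smul_one_eq_zero H _).2 (hsing i hi)) hy hprod hHy⟩
  · have hR : spectrum ℂ H = (↑) '' spectrum ℝ H := by
      rw [hH.spectrum_eq_image_range, hH.spectrum_real_eq_range_eigenvalues]
      rfl
    have hkℝ : (spectrum ℝ H).ncard = k := by
      rwa [hR, Set.ncard_image_of_injective _ Complex.ofReal_injective] at hk
    obtain ⟨μ, hμ, hrange, hμ0⟩ := Set.exists_injective_range_eq_of_ncard_eq hkℝ
      ((spectrum.algebraMap_mem_iff ℂ).1 hmem) ⟨0, by omega⟩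
    have hspec : spectrum ℂ H = Set.range (fun i => (μ i : ℂ)) := by
      rw [hR, ← hrange, ← Set.range_comp]
      rfl
    have hsimple' : H.charpoly.rootMultiplicity (μ ⟨0, by omega⟩ : ℂ) = 1 := by
      rwa [hμ0]
    exact ⟨μ, hμ, fun i _ => (mem_spectrum_iff_det_sub_smul_one_eq_zero H _).1 (hspec ▸ ⟨i, rfl⟩),
      hH.exists_aeval_prod_eq_smul_vecMulVec (μ := fun i => (μ i : ℂ))
        (Complex.ofReal_injective.comp hμ) hspec.symm hsimple'⟩
  · rintro ⟨μ, hμ, hsing, _, _, _, hy, hprod, hHy⟩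
    rw [spectrum_eq_range_of_aeval_prod_eq_smul_vecMulVec
        (fun i hi => (mem_spectrum_iff_det_sub_smul_one_eq_zero H _).2 (hsing i hi)) hy hprod hHy,
      Set.ncard_range_of_injective (f := fun i => (μ i : ℂ)) (Complex.ofReal_injective.comp hμ),
      Nat.card_fin]
end

section
/- Let G be a connected simple undirected graph of order n with Laplacian matrix L. Then G has exactly k (2 ≤ k ≤ n) distinct Laplacian eigenvalues if and only if there exist k − 1 distinct nonzero real numbers μ₁, μ₂, …, μ_{k−1} such that: (i) L − μᵢI is singular for each 1 ≤ i ≤ k − 1; and (ii) ∏_{i=1}^{k−1} (L − μᵢI) = (−1)^{k−1} (∏_{i=1}^{k−1} μᵢ / n) · J, where J is the n×n all-ones matrix. Moreover, in that case μ₁, μ₂, …, μ_{k−1}, 0 are exactly the k distinct Laplacian eigenvalues of G. -/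
/-!
The Laplacian `L` is symmetric, so a real polynomial annihilates `L` exactly when it vanishes
on the spectrum. If `p = ∏ (X - μᵢ)` runs over the nonzero eigenvalues, then `X * p`
annihilates `L`, so `L p(L) = p(L) L = 0`. For a connected graph `ker L` consists of the
constant vectors, hence `p(L)` has constant columns and constant rows, i.e. `p(L) = c J`;
evaluating at the all-ones vector (an eigenvector for `0`) gives `c n = p(0) = (-1)^(k-1) ∏ μᵢ`.
Conversely `p(L) = c J` and `L J = 0` give `L p(L) = 0`, so every eigenvalue is `0` or a `μᵢ`.
-/

open Polynomial Matrix

theorem IsSelfAdjoint.aeval_eq_zero_iff {A : Type*} [Ring A] [StarRing A] [Algebra ℝ A]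
    [TopologicalSpace A] [ContinuousFunctionalCalculus ℝ A IsSelfAdjoint] [Nontrivial A]
    {a : A} (ha : IsSelfAdjoint a) (q : ℝ[X]) :
    aeval a q = 0 ↔ ∀ t ∈ spectrum ℝ a, q.eval t = 0 := by
  refine ⟨fun h t ht => ?_, fun h => ?_⟩
  · simpa [h, spectrum.zero_eq] using spectrum.subset_polynomial_aeval a q ⟨t, ht, rfl⟩
  · rw [← cfc_polynomial q a, cfc_congr (g := 0) h, cfc_zero]

namespace Matrix

variable {ι : Type*} [Fintype ι] [DecidableEq ι]

theorem mem_spectrum_iff_det_sub_smul_eq_zero {K : Type*} [Field K] (A : Matrix ι ι K) (t : K) :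
    t ∈ spectrum K A ↔ (A - t • 1).det = 0 := by
  rw [mem_spectrum_iff_isRoot_charpoly, IsRoot.def, eval_charpoly, ← neg_sub, det_neg,
    scalar_apply, smul_one_eq_diagonal]
  simp

theorem aeval_mulVec_of_mulVec_eq_smul_s10 {R : Type*} [CommRing R] (A : Matrix ι ι R) {v : ι → R}
    {t : R} (hv : A *ᵥ v = t • v) (q : R[X]) : aeval A q *ᵥ v = q.eval t • v := by
  induction q using Polynomial.induction_on' with
  | add p q hp hq => rw [map_add, add_mulVec, hp, hq, eval_add, add_smul]
  | monomial k a =>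
    have hpow : (A ^ k) *ᵥ v = t ^ k • v := by
      induction k with
      | zero => simp
      | succ k ih => rw [pow_succ', ← mulVec_mulVec, ih, mulVec_smul, hv, smul_smul, pow_succ]
    rw [aeval_monomial, Algebra.algebraMap_eq_smul_one, smul_mul_assoc, one_mul, smul_mulVec,
      hpow, smul_smul, eval_monomial]

end Matrix

namespace SimpleGraph

variable {V : Type*} [Fintype V] [DecidableEq V] (G : SimpleGraph V) [DecidableRel G.Adj]

theorem lapMatrix_mul_of_one {R : Type*} [Ring R] :
    G.lapMatrix R * of (fun _ _ => (1 : R)) = 0 := by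
  ext i j
  simpa [mul_apply, mulVec, dotProduct] using
    congrFun (G.lapMatrix_mulVec_const_eq_zero (R := R)) i

theorem zero_mem_spectrum_lapMatrix [Nonempty V] : (0 : ℝ) ∈ spectrum ℝ (G.lapMatrix ℝ) := by
  simp [mem_spectrum_iff_det_sub_smul_eq_zero]

variable {G}

theorem Connected.eq_of_lapMatrix_mulVec_eq_zero (hG : G.Connected) {x : V → ℝ}
    (hx : G.lapMatrix ℝ *ᵥ x = 0) (i j : V) : x i = x j :=
  G.lapMatrix_mulVec_eq_zero_iff_forall_reachable.1 hx i j (hG.preconnected i j)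

theorem Connected.exists_eq_smul_of_lapMatrix_mul_eq_zero (hG : G.Connected)
    {M : Matrix V V ℝ} (hLM : G.lapMatrix ℝ * M = 0) (hML : M * G.lapMatrix ℝ = 0) :
    ∃ c : ℝ, M = c • of fun _ _ => (1 : ℝ) := by
  have hcol (j i i' : V) : M i j = M i' j := by
    refine hG.eq_of_lapMatrix_mulVec_eq_zero (x := fun i => M i j) ?_ i i'
    ext i
    simpa [mul_apply, mulVec, dotProduct] using congrFun₂ hLM i j
  have hrow (i j j' : V) : M i j = M i j' := by
    refine hG.eq_of_lapMatrix_mulVec_eq_zero (x := M i) ?_ j j'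
    rw [← (G.isSymm_lapMatrix (R := ℝ)).eq, ← vecMul_transpose]
    ext j
    simpa [mul_apply, vecMul, dotProduct] using congrFun₂ hML i j
  obtain ⟨v⟩ := hG.nonempty
  refine ⟨M v v, ?_⟩
  ext i j
  rw [Matrix.smul_apply, of_apply, smul_eq_mul, mul_one, hcol j i v, hrow v j v]

theorem Connected.aeval_lapMatrix_eq_smul (hG : G.Connected) {p : ℝ[X]}
    (hp : ∀ t ∈ spectrum ℝ (G.lapMatrix ℝ), t ≠ 0 → p.eval t = 0) :
    aeval (G.lapMatrix ℝ) p = (p.eval 0 / Fintype.card V) • of fun _ _ => (1 : ℝ) := by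
  have : Nonempty V := hG.nonempty
  have hXp : aeval (G.lapMatrix ℝ) (X * p) = 0 := by
    refine ((G.isHermitian_lapMatrix ℝ).isSelfAdjoint.aeval_eq_zero_iff _).2 fun t ht => ?_
    rcases eq_or_ne t 0 with rfl | ht0
    · simp
    · simp [hp t ht ht0]
  obtain ⟨c, hc⟩ := hG.exists_eq_smul_of_lapMatrix_mul_eq_zero
    (by simpa using hXp) (by simpa [mul_comm X p] using hXp)
  have hone : aeval (G.lapMatrix ℝ) p *ᵥ (fun _ => 1) = p.eval 0 • fun _ => 1 :=
    (G.lapMatrix ℝ).aeval_mulVec_of_mulVec_eq_smul_s10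
      (by simpa using G.lapMatrix_mulVec_const_eq_zero) p
  have hc' : Fintype.card V * c = p.eval 0 := by
    simpa [hc, mulVec, dotProduct] using congrFun hone (Classical.arbitrary V)
  rw [hc, ← hc', mul_div_cancel_left₀ _ (by positivity)]

theorem eq_zero_or_eval_eq_zero_of_mem_spectrum_lapMatrix [Nonempty V] {p : ℝ[X]} {c : ℝ}
    (hp : aeval (G.lapMatrix ℝ) p = c • of fun _ _ => (1 : ℝ)) {t : ℝ}
    (ht : t ∈ spectrum ℝ (G.lapMatrix ℝ)) : t = 0 ∨ p.eval t = 0 := by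
  have hXp : aeval (G.lapMatrix ℝ) (X * p) = 0 := by
    rw [map_mul, aeval_X, hp, Matrix.mul_smul, lapMatrix_mul_of_one, smul_zero]
  simpa using ((G.isHermitian_lapMatrix ℝ).isSelfAdjoint.aeval_eq_zero_iff _).1 hXp t ht

theorem spectrum_lapMatrix_eq_insert_zero_range [Nonempty V] {ι : Type*} [Fintype ι]
    {μ : ι → ℝ} {c : ℝ} (hμ : ∀ i, μ i ∈ spectrum ℝ (G.lapMatrix ℝ))
    (hp : aeval (G.lapMatrix ℝ) (∏ i, (X - C (μ i))) = c • of fun _ _ => (1 : ℝ)) :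
    spectrum ℝ (G.lapMatrix ℝ) = insert 0 (Set.range μ) := by
  refine subset_antisymm (fun t ht => ?_)
    (Set.insert_subset G.zero_mem_spectrum_lapMatrix (Set.range_subset_iff.2 hμ))
  rcases eq_zero_or_eval_eq_zero_of_mem_spectrum_lapMatrix hp ht with rfl | h
  · exact Set.mem_insert _ _
  · obtain ⟨i, -, hi⟩ := Finset.prod_eq_zero_iff.1 (by simpa [eval_prod] using h)
    exact Set.mem_insert_of_mem _ ⟨i, (sub_eq_zero.1 hi).symm⟩

end SimpleGraph

theorem laplacian_distinct_eigenvalues_iff_general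
    (n k : ℕ) (hk2 : 2 ≤ k)
    (G : SimpleGraph (Fin n)) [DecidableRel G.Adj] (hG : G.Connected) :
    ((spectrum ℝ (G.lapMatrix ℝ)).ncard = k ↔
      ∃ μ : Fin (k - 1) → ℝ, Function.Injective μ ∧ (∀ i, μ i ≠ 0) ∧
        (∀ i, (G.lapMatrix ℝ - μ i • 1).det = 0) ∧
        (Polynomial.aeval (G.lapMatrix ℝ)) (∏ i, (X - C (μ i))) =
          ((-1 : ℝ) ^ (k - 1) * (∏ i, μ i) / n) • Matrix.of (fun _ _ => (1 : ℝ))) ∧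
    (∀ μ : Fin (k - 1) → ℝ, Function.Injective μ → (∀ i, μ i ≠ 0) →
      (∀ i, (G.lapMatrix ℝ - μ i • 1).det = 0) →
      (Polynomial.aeval (G.lapMatrix ℝ)) (∏ i, (X - C (μ i))) =
        ((-1 : ℝ) ^ (k - 1) * (∏ i, μ i) / n) • Matrix.of (fun _ _ => (1 : ℝ)) →
      spectrum ℝ (G.lapMatrix ℝ) = insert (0 : ℝ) (Set.range μ)) := by
  have : Nonempty (Fin n) := hG.nonempty
  have hdet := (G.lapMatrix ℝ).mem_spectrum_iff_det_sub_smul_eq_zero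
  have hspec {μ : Fin (k - 1) → ℝ} (hsing : ∀ i, (G.lapMatrix ℝ - μ i • 1).det = 0) {c : ℝ}
      (hp : aeval (G.lapMatrix ℝ) (∏ i, (X - C (μ i))) = c • of fun _ _ => (1 : ℝ)) :=
    G.spectrum_lapMatrix_eq_insert_zero_range (fun i => (hdet _).2 (hsing i)) hp
  refine ⟨⟨fun hcard => ?_, fun ⟨μ, hinj, hμ0, hsing, hp⟩ => ?_⟩,
    fun _ _ _ hsing hp => hspec hsing hp⟩
  · obtain ⟨m, μ, hinj, hrange⟩ :=
      ((G.lapMatrix ℝ).finite_spectrum.sdiff (t := {0})).fin_param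
    obtain rfl : m = k - 1 := by
      rw [← Nat.card_fin m, ← Set.ncard_range_of_injective hinj, hrange,
        Set.ncard_sdiff_singleton_of_mem G.zero_mem_spectrum_lapMatrix, hcard]
    have hmem (i) : μ i ∈ spectrum ℝ (G.lapMatrix ℝ) \ {0} :=
      hrange ▸ Set.mem_range_self i
    refine ⟨μ, hinj, fun i => (hmem i).2, fun i => (hdet _).1 (hmem i).1, ?_⟩
    rw [hG.aeval_lapMatrix_eq_smul fun t ht ht0 => ?_]
    · simp [eval_prod, Finset.prod_neg]
    · obtain ⟨i, rfl⟩ : t ∈ Set.range μ := hrange ▸ ⟨ht, ht0⟩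
      simpa [eval_prod] using Finset.prod_eq_zero (Finset.mem_univ i) (sub_self (μ i))
  · rw [hspec hsing hp, Set.ncard_insert_of_notMem (by rintro ⟨i, hi⟩; exact hμ0 i hi),
      Set.ncard_range_of_injective hinj, Nat.card_fin]
    omega

/-- **Theorem.** Let `G` be a connected simple graph of order `n` with Laplacian matrix `L`.
Then `G` has exactly `k` (`2 ≤ k ≤ n`) distinct Laplacian eigenvalues iff there exist `k − 1`
distinct nonzero real numbers `μ₁, …, μ_{k−1}` such that (i) `L − μᵢI` is singular for each
`i`, and (ii) `∏_{i=1}^{k−1} (L − μᵢI) = (−1)^{k−1} (∏_{i=1}^{k−1} μᵢ / n) · J`, where `J` is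
the all-ones matrix. Moreover, `μ₁, …, μ_{k−1}, 0` are then exactly the `k` distinct Laplacian
eigenvalues of `G`. -/
theorem laplacian_distinct_eigenvalues_iff
    (n k : ℕ) (hk2 : 2 ≤ k) (hkn : k ≤ n)
    (G : SimpleGraph (Fin n)) [DecidableRel G.Adj] (hG : G.Connected) :
    ((spectrum ℝ (G.lapMatrix ℝ)).ncard = k ↔
      ∃ μ : Fin (k - 1) → ℝ, Function.Injective μ ∧ (∀ i, μ i ≠ 0) ∧
        (∀ i, (G.lapMatrix ℝ - μ i • 1).det = 0) ∧
        (Polynomial.aeval (G.lapMatrix ℝ)) (∏ i, (X - C (μ i))) =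
          ((-1 : ℝ) ^ (k - 1) * (∏ i, μ i) / n) • Matrix.of (fun _ _ => (1 : ℝ))) ∧
    (∀ μ : Fin (k - 1) → ℝ, Function.Injective μ → (∀ i, μ i ≠ 0) →
      (∀ i, (G.lapMatrix ℝ - μ i • 1).det = 0) →
      (Polynomial.aeval (G.lapMatrix ℝ)) (∏ i, (X - C (μ i))) =
        ((-1 : ℝ) ^ (k - 1) * (∏ i, μ i) / n) • Matrix.of (fun _ _ => (1 : ℝ)) →
      spectrum ℝ (G.lapMatrix ℝ) = insert (0 : ℝ) (Set.range μ)) :=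
  laplacian_distinct_eigenvalues_iff_general n k hk2 G hG
end

section
/- Let G be a finite simple undirected graph whose adjacency matrix has n distinct eigenvalues (n the order of G). Then every nonidentity automorphism of G has order 2; consequently the automorphism group of G is Abelian. -/
/-!
The permutation matrix `P` of an automorphism `φ` of `G` commutes with the adjacency matrix `A`.
Conjugating by an orthonormal eigenbasis of `A` turns `A` into a diagonal matrix with distinct
entries, and anything commuting with such a matrix is diagonal, hence symmetric; conjugating back,
`P` is symmetric, i.e. `P⁻¹ = Pᵀ = P`, so `φ² = 1`. A group in which every element squares to `1`
is abelian.
-/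

open Matrix

namespace Matrix

variable {n : Type*} [Fintype n] [DecidableEq n]

theorem IsHermitian.eigenvalues_injective_of_ncard_spectrum {𝕜 : Type*} [RCLike 𝕜]
    {A : Matrix n n 𝕜} (hA : A.IsHermitian) (h : (spectrum ℝ A).ncard = Fintype.card n) :
    Function.Injective hA.eigenvalues := by
  rw [hA.spectrum_real_eq_range_eigenvalues, ← Set.image_univ, ← Finset.coe_univ,
    ← Finset.coe_image, Set.ncard_coe_finset, ← Finset.card_univ, Finset.card_image_iff,
    Finset.coe_univ] at h
  exact Set.injOn_univ.mp h

theorem isDiag_of_commute_diagonal {α : Type*} [CommRing α] [NoZeroDivisors α] {d : n → α}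
    (hd : Function.Injective d) {C : Matrix n n α} (hC : Commute C (diagonal d)) : C.IsDiag := by
  intro i j hij
  have hij' : C i j * d j = d i * C i j := by
    simpa only [mul_diagonal, diagonal_mul] using congrFun (congrFun hC.eq i) j
  have : (d j - d i) * C i j = 0 := by linear_combination hij'
  exact (mul_eq_zero.mp this).resolve_left (sub_ne_zero.mpr (hd.ne hij.symm))

theorem IsHermitian.isSymm_of_commute {A B : Matrix n n ℝ} (hA : A.IsHermitian)
    (hinj : Function.Injective hA.eigenvalues) (hB : Commute B A) : B.IsSymm := by
  let f := Unitary.conjStarAlgAut ℝ (Matrix n n ℝ) (star hA.eigenvectorUnitary)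
  have hdiag : (f B).IsDiag := by
    refine isDiag_of_commute_diagonal (RCLike.ofReal_injective.comp hinj) ?_
    rw [← hA.conjStarAlgAut_star_eigenvectorUnitary]
    exact hB.map f
  have : IsSelfAdjoint (f.symm (f B)) :=
    (isHermitian_iff_isSymm.mpr hdiag.isSymm).isSelfAdjoint.map f.symm
  rw [f.symm_apply_apply] at this
  exact isHermitian_iff_isSymm.mp this.isHermitian

end Matrix

theorem Equiv.Perm.permMatrix_isSymm_iff {n R : Type*} [DecidableEq n] [MulZeroOneClass R] [Nontrivial R]
    (σ : Equiv.Perm n) : (σ.permMatrix R).IsSymm ↔ σ * σ = 1 := by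
  rw [IsSymm, transpose_permMatrix, ← inv_eq_iff_mul_eq_one]
  refine ⟨fun h => Equiv.ext fun x => Option.some_injective _ ?_, fun h => by rw [h]⟩
  simpa using congrArg (· x) (PEquiv.toMatrix_injective h)

namespace SimpleGraph

variable {V : Type*} [DecidableEq V] [Fintype V] (G : SimpleGraph V) [DecidableRel G.Adj]

theorem commute_permMatrix_adjMatrix {R : Type*} [NonAssocSemiring R] {φ : Equiv.Perm V}
    (hφ : ∀ u v, G.Adj (φ u) (φ v) ↔ G.Adj u v) : Commute (φ.permMatrix R) (G.adjMatrix R) := by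
  ext u v
  rw [PEquiv.toMatrix_toPEquiv_mul, PEquiv.mul_toMatrix_toPEquiv]
  simp [adjMatrix_apply, ← hφ u (φ.symm v)]

end SimpleGraph

theorem commute_of_mul_self_eq_one {M : Type*} [Group M] {a b : M} (ha : a * a = 1)
    (hb : b * b = 1) (hab : a * b * (a * b) = 1) : Commute a b :=
  calc a * b = (a * b)⁻¹ := (inv_eq_of_mul_eq_one_right hab).symm
    _ = b⁻¹ * a⁻¹ := mul_inv_rev a b
    _ = b * a := by rw [inv_eq_of_mul_eq_one_right ha, inv_eq_of_mul_eq_one_right hb]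

/-- **Proposition (Mowshowitz).** Let `G` be a finite simple undirected graph whose adjacency
matrix has `n` distinct eigenvalues (`n` the order of `G`). Then every nonidentity
automorphism of `G` has order 2; consequently the automorphism group of `G` is Abelian. -/
theorem aut_order_two_of_distinct_eigenvalues
    (V : Type*) [Fintype V] [DecidableEq V]
    (G : SimpleGraph V) [DecidableRel G.Adj]
    (h : (spectrum ℝ (G.adjMatrix ℝ)).ncard = Fintype.card V) :
    (∀ φ : Equiv.Perm V, (∀ u v, G.Adj (φ u) (φ v) ↔ G.Adj u v) → φ ≠ 1 → orderOf φ = 2) ∧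
    (∀ φ ψ : Equiv.Perm V, (∀ u v, G.Adj (φ u) (φ v) ↔ G.Adj u v) →
      (∀ u v, G.Adj (ψ u) (ψ v) ↔ G.Adj u v) → φ * ψ = ψ * φ) := by
  have hA : (G.adjMatrix ℝ).IsHermitian := isHermitian_iff_isSymm.mpr G.isSymm_adjMatrix
  have hinj := hA.eigenvalues_injective_of_ncard_spectrum h
  have involutive (φ : Equiv.Perm V) (hφ : ∀ u v, G.Adj (φ u) (φ v) ↔ G.Adj u v) : φ * φ = 1 :=
    (φ.permMatrix_isSymm_iff (R := ℝ)).mp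
      (hA.isSymm_of_commute hinj (G.commute_permMatrix_adjMatrix hφ))
  refine ⟨fun φ hφ hne => orderOf_eq_prime (by rw [sq, involutive φ hφ]) hne,
    fun φ ψ hφ hψ => commute_of_mul_self_eq_one (involutive φ hφ) (involutive ψ hψ) ?_⟩
  exact involutive (φ * ψ) fun u v => (hφ _ _).trans (hψ u v)
end
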